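/- arXiv:1601.01501 — 5 statements merged into one kernel-verified Lean document; each statement's English description precedes it below -/
import Mathlib

section
/- Let (u_I) be a family of elements of a commutative ring indexed by subsets I of a finite set J, and define partial cumulants κ_H(u) = ∑_{π ∈ P(H)} μ(π,{H}) · ∏_{B ∈ π} u_B for nonempty H ⊆ J. Then for every nonempty H ⊆ J one has the inversion u_H = ∑_{π ∈ P(H)} ∏_{B ∈ π} κ_B(u). -/
/-!
Induction on `H`. Splitting off the block that contains a fixed `a ∈ H`, the right-hand side
becomes `∑_{a ∈ B ⊆ H} κ_B · (the same sum over partitions of H \ B)`, which by induction is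
`κ_H + ∑_{a ∈ B ⊊ H} κ_B u_{H \ B}`. Expanding the cumulants and regrouping, a partition `π` of
`H` arises once from `κ_H` and once from each block `C ∌ a` of `π` (with `C = H \ B`), so its
coefficient is `μ(n) + (n - 1) μ(n - 1)` for `n = #π`, which is `1` if `n = 1` and `0` otherwise.
-/

open scoped BigOperators

/-- Partial cumulants of a family `u` indexed by finite subsets of `J`:
`κ_H(u) = ∑_{π ∈ P(H)} μ(π,{H}) · ∏_{B ∈ π} u_B`, where
`μ(π,{H}) = (-1)^(#(π)-1)·(#(π)-1)!`. -/
noncomputable def partialCumulant {J R : Type*} [DecidableEq J] [CommRing R]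
    (u : Finset J → R) (H : Finset J) : R :=
  ∑ᶠ π : Finpartition H,
    (((-1 : ℤ) ^ (π.parts.card - 1) * (π.parts.card - 1).factorial : ℤ)) •
      ∏ B ∈ π.parts, u B

open Finset
open scoped Nat

namespace Finpartition

theorem parts_eq_singleton_of_card_eq_one {α : Type*} [Lattice α] [OrderBot α] {a : α}
    (P : Finpartition a) (h : #P.parts = 1) : P.parts = {a} := by
  obtain ⟨b, hb⟩ := card_eq_one.1 h
  have hba := P.sup_parts
  rw [hb, sup_singleton, id] at hba
  rw [hb, hba]

section GeneralizedBooleanAlgebra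

variable {α : Type*} [GeneralizedBooleanAlgebra α] [DecidableEq α] {a b : α}

theorem parts_avoid_of_mem (P : Finpartition a) (hb : b ∈ P.parts) :
    (P.avoid b).parts = P.parts.erase b := by
  ext c
  rw [mem_avoid, mem_erase]
  constructor
  · rintro ⟨d, hd, hdb, rfl⟩
    have hdb' : d ≠ b := by rintro rfl; exact hdb le_rfl
    have hdisj : Disjoint d b := P.disjoint hd hb hdb'
    rw [hdisj.sdiff_eq_left]
    exact ⟨hdb', hd⟩
  · rintro ⟨hcb, hc⟩
    have hdisj : Disjoint c b := P.disjoint hc hb hcb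
    exact ⟨c, hc, fun h ↦ P.ne_bot hc (hdisj.eq_bot_of_le h), hdisj.sdiff_eq_left⟩

def avoidEquiv (hb : b ≠ ⊥) (hba : b ≤ a) :
    {P : Finpartition a // b ∈ P.parts} ≃ Finpartition (a \ b) where
  toFun P := P.1.avoid b
  invFun Q := ⟨Q.extend hb disjoint_sdiff_self_left (sdiff_sup_cancel hba), mem_insert_self _ _⟩
  left_inv P := Subtype.ext <| Finpartition.ext <| by
    rw [extend_parts, parts_avoid_of_mem _ P.2, insert_erase P.2]
  right_inv Q := Finpartition.ext <| by
    have hbQ : b ∉ Q.parts := fun h ↦ hb (disjoint_sdiff_self_left.symm.eq_bot_of_le (Q.le h))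
    rw [parts_avoid_of_mem _ (mem_insert_self _ _), extend_parts, erase_insert hbQ]

end GeneralizedBooleanAlgebra

variable {α M : Type*} [DecidableEq α] [AddCommMonoid M] {s t : Finset α}

theorem sum_filter_mem_parts_avoid (ht : t.Nonempty) (hts : t ⊆ s)
    (f : Finpartition (s \ t) → M) :
    ∑ P : Finpartition s with t ∈ P.parts, f (P.avoid t) = ∑ Q, f Q := by
  refine (sum_subtype (p := fun P : Finpartition s ↦ t ∈ P.parts) (F := inferInstance) _
    (by simp) _).trans ?_
  exact Fintype.sum_equiv (avoidEquiv (bot_eq_empty ▸ ht.ne_empty) hts) _ _ fun _ ↦ rfl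

theorem filter_parts_mem_eq_singleton (P : Finpartition s) {a : α} (ha : a ∈ s) :
    {t ∈ P.parts | a ∈ t} = {P.part a} := by
  ext t
  rw [mem_filter, mem_singleton]
  exact ⟨fun h ↦ ((P.part_eq_iff_mem h.1).2 h.2).symm,
    by rintro rfl; exact ⟨P.part_mem.2 ha, P.mem_part_self.2 ha⟩⟩

theorem filter_parts_not_mem_eq_erase (P : Finpartition s) {a : α} (ha : a ∈ s) :
    {t ∈ P.parts | a ∉ t} = P.parts.erase (P.part a) := by
  rw [filter_not, P.filter_parts_mem_eq_singleton ha, sdiff_singleton_eq_erase]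

theorem sum_sum_filter_parts (p : Finset α → Prop) [DecidablePred p]
    (f : (t : Finset α) → Finpartition (s \ t) → M) :
    ∑ P : Finpartition s, ∑ t ∈ P.parts with p t, f t (P.avoid t) =
      ∑ t ∈ s.powerset with t.Nonempty ∧ p t, ∑ Q, f t Q := by
  rw [sum_comm' (s' := fun t ↦ {P : Finpartition s | t ∈ P.parts})]
  · refine sum_congr rfl fun t ht ↦ ?_
    rw [mem_filter, mem_powerset] at ht
    exact sum_filter_mem_parts_avoid ht.2.1 ht.1 (f t)
  · intro P t
    simp only [mem_univ, true_and, mem_filter, mem_powerset]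
    exact ⟨fun h ↦ ⟨h.1, P.le h.1, P.nonempty_of_mem_parts h.1, h.2⟩,
      fun h ↦ ⟨h.1, h.2.2.2⟩⟩

theorem sum_prod_parts_eq_sum_powerset_mem {R : Type*} [CommSemiring R] {a : α} (ha : a ∈ s)
    (w : Finset α → R) :
    ∑ P : Finpartition s, ∏ t ∈ P.parts, w t =
      ∑ t ∈ s.powerset with a ∈ t, w t * ∑ Q : Finpartition (s \ t), ∏ r ∈ Q.parts, w r := by
  have hsplit (P : Finpartition s) : ∏ t ∈ P.parts, w t =
      ∑ t ∈ P.parts with a ∈ t, w t * ∏ r ∈ (P.avoid t).parts, w r := by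
    rw [P.filter_parts_mem_eq_singleton ha, sum_singleton,
      parts_avoid_of_mem _ (P.part_mem.2 ha), mul_prod_erase _ _ (P.part_mem.2 ha)]
  rw [sum_congr rfl fun P _ ↦ hsplit P,
    sum_sum_filter_parts (a ∈ ·) fun t Q ↦ w t * ∏ r ∈ Q.parts, w r]
  refine sum_congr ?_ fun t _ ↦ by rw [mul_sum]
  ext t
  simpa using fun _ h ↦ ⟨a, h⟩

theorem sum_prod_parts_empty {R : Type*} [CommSemiring R] (w : Finset α → R) :
    ∑ Q : Finpartition (∅ : Finset α), ∏ r ∈ Q.parts, w r = 1 := by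
  rw [← bot_eq_empty, Fintype.sum_unique, Finpartition.parts_eq_empty_iff.2 rfl, prod_empty]

theorem sum_ite_card_parts_eq_one {M : Type*} [AddCommMonoid M] (hs : s.Nonempty)
    (f : Finset (Finset α) → M) :
    ∑ P : Finpartition s, (if #P.parts = 1 then f P.parts else 0) = f {s} := by
  have hs' : s ≠ ⊥ := hs.ne_empty
  rw [sum_eq_single_of_mem (indiscrete hs') (mem_univ _)]
  · simp [indiscrete]
  · intro P _ hP
    refine if_neg fun h ↦ hP (Finpartition.ext ?_)
    rw [P.parts_eq_singleton_of_card_eq_one h]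
    rfl

end Finpartition

-- `μ(π, {H})` for a partition `π` with `n` blocks
def partitionMobius (n : ℕ) : ℤ := (-1) ^ (n - 1) * (n - 1)!

theorem partitionMobius_succ_add_mul (n : ℕ) :
    partitionMobius (n + 1) + n * partitionMobius n = if n = 0 then 1 else 0 := by
  rcases n with _ | n
  · simp [partitionMobius]
  · simp only [partitionMobius, add_tsub_cancel_right, Nat.factorial_succ]
    push_cast
    ring

theorem sum_powerset_mem_erase_eq_sum_sdiff {α M : Type*} [DecidableEq α] [AddCommMonoid M]
    {s : Finset α} {a : α} (ha : a ∈ s) (f : Finset α → Finset α → M) :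
    ∑ B ∈ {B ∈ s.powerset | a ∈ B}.erase s, f B (s \ B) =
      ∑ C ∈ s.powerset with C.Nonempty ∧ a ∉ C, f (s \ C) C := by
  refine sum_nbij' (s \ ·) (s \ ·) ?_ ?_ ?_ ?_ ?_ <;>
    simp only [mem_erase, mem_filter, mem_powerset, and_imp]
  · intro B hBs hBsub haB
    refine ⟨sdiff_subset, sdiff_nonempty.2 fun h ↦ hBs (hBsub.antisymm h), ?_⟩
    simp [haB]
  · intro C hCsub hC haC
    refine ⟨?_, sdiff_subset, mem_sdiff.2 ⟨ha, haC⟩⟩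
    rw [Ne, Finset.sdiff_eq_self_iff_disjoint]
    exact fun h ↦ hC.ne_empty (disjoint_self.1 (h.mono_left hCsub))
  · exact fun B _ hBsub _ ↦ Finset.sdiff_sdiff_eq_self hBsub
  · exact fun C hCsub _ _ ↦ Finset.sdiff_sdiff_eq_self hCsub
  · intro B _ hBsub _
    rw [Finset.sdiff_sdiff_eq_self hBsub]

section Cumulant

variable {J R : Type*} [DecidableEq J] [CommRing R] (u : Finset J → R)

theorem partialCumulant_eq_sum (H : Finset J) :
    partialCumulant u H =
      ∑ π : Finpartition H, (partitionMobius #π.parts : R) * ∏ B ∈ π.parts, u B := by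
  rw [partialCumulant, finsum_eq_sum_of_fintype]
  simp only [zsmul_eq_mul, partitionMobius]

theorem sum_partialCumulant_sdiff_mul {H : Finset J} {a : J} (ha : a ∈ H) :
    ∑ C ∈ H.powerset with C.Nonempty ∧ a ∉ C, partialCumulant u (H \ C) * u C =
      ∑ π : Finpartition H,
        ((#π.parts - 1 : ℕ) * partitionMobius (#π.parts - 1) : R) * ∏ B ∈ π.parts, u B := by
  simp only [partialCumulant_eq_sum, sum_mul]
  rw [← Finpartition.sum_sum_filter_parts (a ∉ ·)
    fun C Q ↦ (partitionMobius #Q.parts : R) * (∏ B ∈ Q.parts, u B) * u C]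
  refine sum_congr rfl fun π _ ↦ ?_
  have haπ := π.part_mem.2 ha
  calc _ = ∑ C ∈ π.parts.erase (π.part a),
          (partitionMobius (#π.parts - 1) : R) * ∏ B ∈ π.parts, u B := by
        rw [π.filter_parts_not_mem_eq_erase ha]
        refine sum_congr rfl fun C hC ↦ ?_
        have hCπ := mem_of_mem_erase hC
        rw [Finpartition.parts_avoid_of_mem _ hCπ, card_erase_of_mem hCπ, mul_assoc,
          prod_erase_mul _ _ hCπ]
    _ = _ := by rw [sum_const, card_erase_of_mem haπ, nsmul_eq_mul, mul_assoc]

theorem eq_partialCumulant_add_sum {H : Finset J} {a : J} (ha : a ∈ H) :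
    u H = partialCumulant u H +
      ∑ B ∈ {B ∈ H.powerset | a ∈ B}.erase H, partialCumulant u B * u (H \ B) := by
  rw [sum_powerset_mem_erase_eq_sum_sdiff ha fun B C ↦ partialCumulant u B * u C,
    sum_partialCumulant_sdiff_mul u ha, partialCumulant_eq_sum, ← sum_add_distrib]
  have hH : H ≠ ∅ := ne_empty_of_mem ha
  calc u H = ∑ π : Finpartition H, if #π.parts = 1 then ∏ B ∈ π.parts, u B else 0 := by
        rw [Finpartition.sum_ite_card_parts_eq_one ⟨a, ha⟩ (∏ B ∈ ·, u B), prod_singleton]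
    _ = _ := sum_congr rfl fun π _ ↦ by
        obtain ⟨n, hn⟩ := Nat.exists_eq_add_of_le' (π.parts_nonempty hH).card_pos
        have hcoeff := congrArg (Int.cast : ℤ → R) (partitionMobius_succ_add_mul n)
        push_cast at hcoeff
        rw [hn, add_tsub_cancel_right, ← add_mul, hcoeff]
        split_ifs <;> simp_all

end Cumulant

/-- Moment–cumulant inversion: for every nonempty `H ⊆ J`,
`u_H = ∑_{π ∈ P(H)} ∏_{B ∈ π} κ_B(u)`. -/
theorem stmt_4 {J R : Type*} [DecidableEq J] [CommRing R]
    (u : Finset J → R) (H : Finset J) (hH : H.Nonempty) :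
    u H = ∑ᶠ π : Finpartition H, ∏ B ∈ π.parts, partialCumulant u B := by
  rw [finsum_eq_sum_of_fintype]
  induction H using Finset.strongInduction with
  | H H ih =>
  obtain ⟨a, ha⟩ := hH
  have hHmem : H ∈ {B ∈ H.powerset | a ∈ B} := mem_filter.2 ⟨mem_powerset_self H, ha⟩
  rw [Finpartition.sum_prod_parts_eq_sum_powerset_mem ha, ← add_sum_erase _ _ hHmem,
    Finset.sdiff_self, Finpartition.sum_prod_parts_empty, mul_one, eq_partialCumulant_add_sum u ha]
  congr 1
  refine sum_congr rfl fun B hB ↦ ?_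
  obtain ⟨hBH, hB⟩ := mem_erase.1 hB
  obtain ⟨hBsub, haB⟩ := mem_filter.1 hB
  rw [ih (H \ B) (sdiff_ssubset (mem_powerset.1 hBsub) ⟨a, haB⟩)
    (sdiff_nonempty.2 fun h ↦ hBH ((mem_powerset.1 hBsub).antisymm h))]
end

section
/- Let K be a finite set, R a field, and fix elements C ≠ 0 and (c_i)_{i∈K} in the field R(α) of rational functions in α, such that C, C⁻¹ and each c_i have no pole at α = 0. For I ⊆ K define v_I = C + α·∑_{i∈I} c_i. Then the alternating product ∏_{G ⊆ K} v_G^{(-1)^{|K|-|G|}} − 1, when written as a rational function of α, is divisible by α^{|K|} (i.e., equals α^{|K|} times a rational function with no pole at 0). -/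
/-!
Let `E` and `O` be the products of the `v_G` over the subsets `G ⊆ K` with `|K| - |G|` even,
resp. odd, so that the alternating product is `E / O`. In the ring of rational functions without
pole at `0` every `v_G = C (1 + α C⁻¹ ∑_{i∈G} c_i)` is a unit, so it suffices that `α^|K|` divides
`E - O` there. Replacing `C` by an indeterminate `Y`, this follows by induction on `K`: adding an
element `a` turns `(E, O)` into `(O · E(Y + α c_a), E · O(Y + α c_a))`, and the shift
`Y ↦ Y + α c_a` changes a polynomial only by a multiple of `α`.
-/

open scoped BigOperators

/-- A rational function in `α` has no pole at `α = 0` iff its (reduced)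
denominator does not vanish at `0`. -/
def NoPoleAtZero {F : Type*} [Field F] (f : RatFunc F) : Prop :=
  Polynomial.eval 0 f.denom ≠ 0

/-- `f = O(α^k)`: `f` equals `α^k` times a rational function with no pole
at `0`. -/
def IsBigO {F : Type*} [Field F] (k : ℕ) (f : RatFunc F) : Prop :=
  ∃ g : RatFunc F, NoPoleAtZero g ∧ f = RatFunc.X ^ k * g

open Finset

theorem isUnit_of_inv_mem {K : Type*} [Field K] {S : Subring K} {f : S} (hf : (f : K) ≠ 0)
    (hinv : (f : K)⁻¹ ∈ S) : IsUnit f :=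
  isUnit_iff_exists_inv.mpr ⟨⟨_, hinv⟩, Subtype.ext (mul_inv_cancel₀ hf)⟩

section SubsetProd

variable {ι M : Type*} [CommMonoid M]

def subsetProdOfSign (K : Finset ι) (ε : ℤ) (f : Finset ι → M) : M :=
  ∏ G ∈ K.powerset with (-1 : ℤ) ^ (#K - #G) = ε, f G

theorem subsetProdOfSign_congr {K : Finset ι} {f g : Finset ι → M} (h : ∀ G ⊆ K, f G = g G)
    (ε : ℤ) : subsetProdOfSign K ε f = subsetProdOfSign K ε g :=
  prod_congr rfl fun G hG => h G (mem_powerset.mp (mem_filter.mp hG).1)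

theorem map_subsetProdOfSign {N F : Type*} [CommMonoid N] [FunLike F M N] [MonoidHomClass F M N]
    (φ : F) (K : Finset ι) (ε : ℤ) (f : Finset ι → M) :
    φ (subsetProdOfSign K ε f) = subsetProdOfSign K ε (fun G => φ (f G)) :=
  map_prod φ _ _

theorem subsetProdOfSign_insert [DecidableEq ι] {a : ι} {K : Finset ι} (ha : a ∉ K) (ε : ℤ)
    (f : Finset ι → M) :
    subsetProdOfSign (insert a K) ε f
      = subsetProdOfSign K (-ε) f * subsetProdOfSign K ε (fun G => f (insert a G)) := by
  simp only [subsetProdOfSign, prod_filter, prod_powerset_insert ha]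
  congr 1 <;> refine prod_congr rfl fun G hG => ?_
  · have hGK := card_le_card (mem_powerset.mp hG)
    simp only [card_insert_of_notMem ha, Nat.succ_sub hGK, pow_succ, mul_neg_one, neg_eq_iff_eq_neg]
  · have haG : a ∉ G := fun h => ha (mem_powerset.mp hG h)
    rw [card_insert_of_notMem ha, card_insert_of_notMem haG, Nat.succ_sub_succ]

theorem prod_zpow_neg_one_pow_eq_div {G₀ : Type*} [DivisionCommMonoid G₀] (K : Finset ι)
    (f : Finset ι → G₀) :
    ∏ G ∈ K.powerset, f G ^ ((-1 : ℤ) ^ (#K - #G))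
      = subsetProdOfSign K 1 f / subsetProdOfSign K (-1) f := by
  rw [← prod_filter_mul_prod_filter_not K.powerset (fun G => (-1 : ℤ) ^ (#K - #G) = 1),
    div_eq_mul_inv, subsetProdOfSign, subsetProdOfSign, ← prod_inv_distrib]
  congr 1
  · exact prod_congr rfl fun G hG => by rw [(mem_filter.mp hG).2, zpow_one]
  · refine prod_congr (filter_congr fun G _ => ?_) fun G hG => ?_
    · rcases neg_one_pow_eq_or ℤ (#K - #G) with h | h <;> simp [h]
    · rw [(mem_filter.mp hG).2, zpow_neg_one]

end SubsetProd

section Divisibility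

open Polynomial

variable {A : Type*} [CommRing A]

theorem C_dvd_comp_X_add_C_sub (x b : A) (p : A[X]) : C x ∣ p.comp (X + C (x * b)) - p := by
  have h := sub_dvd_eval_sub (X + C (x * b)) X (p.map C)
  rw [eval_map, eval_map, add_sub_cancel_left, ← comp, ← comp, comp_X] at h
  exact dvd_trans ⟨C b, C_mul⟩ h

variable {ι : Type*} [DecidableEq ι]

theorem C_pow_card_dvd_subsetProdOfSign_sub (x : A) (c : ι → A) (K : Finset ι) :
    C x ^ #K ∣ subsetProdOfSign K 1 (fun G => X + C (x * ∑ i ∈ G, c i))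
      - subsetProdOfSign K (-1) (fun G => X + C (x * ∑ i ∈ G, c i)) := by
  induction K using Finset.induction_on with
  | empty => simp
  | insert a K ha ih =>
    set σ : A[X] := X + C (x * c a)
    have hshift : ∀ ε, subsetProdOfSign K ε (fun G => X + C (x * ∑ i ∈ insert a G, c i))
        = (subsetProdOfSign K ε fun G => X + C (x * ∑ i ∈ G, c i)).comp σ := by
      intro ε
      rw [subsetProdOfSign, subsetProdOfSign, Polynomial.prod_comp]
      refine prod_congr rfl fun G hG => ?_
      have haG : a ∉ G := fun h => ha (mem_powerset.mp (mem_filter.mp hG).1 h)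
      rw [sum_insert haG, add_comp, X_comp, C_comp, mul_add, C_add]
      ring
    set E := subsetProdOfSign K 1 fun G => X + C (x * ∑ i ∈ G, c i)
    set O := subsetProdOfSign K (-1) fun G => X + C (x * ∑ i ∈ G, c i)
    obtain ⟨R, hR⟩ := ih
    have hE : E = O + C x ^ #K * R := by rw [← hR]; ring
    have hdiff : O * E.comp σ - E * O.comp σ
        = C x ^ #K * (O * (R.comp σ - R) - R * (O.comp σ - O)) := by
      rw [hE, add_comp, mul_comp, pow_comp, C_comp]
      ring
    rw [subsetProdOfSign_insert ha, subsetProdOfSign_insert ha, neg_neg, hshift, hshift, hdiff,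
      card_insert_of_notMem ha, pow_succ]
    exact mul_dvd_mul_left _ (dvd_sub (dvd_mul_of_dvd_right (C_dvd_comp_X_add_C_sub x _ R) _)
      (dvd_mul_of_dvd_right (C_dvd_comp_X_add_C_sub x _ O) _))

theorem pow_card_dvd_subsetProdOfSign_sub (x y : A) (c : ι → A) (K : Finset ι) :
    x ^ #K ∣ subsetProdOfSign K 1 (fun G => y + x * ∑ i ∈ G, c i)
      - subsetProdOfSign K (-1) (fun G => y + x * ∑ i ∈ G, c i) := by
  have h := map_dvd (evalRingHom y) (C_pow_card_dvd_subsetProdOfSign_sub x c K)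
  simpa only [map_sub, map_pow, coe_evalRingHom, eval_C, map_subsetProdOfSign, eval_add, eval_X]
    using h

end Divisibility

section NoPole

open Polynomial

variable {F : Type*} [Field F]

theorem noPoleAtZero_div {p q : F[X]} (hq : q.eval 0 ≠ 0) :
    NoPoleAtZero (algebraMap F[X] (RatFunc F) p / algebraMap F[X] (RatFunc F) q) := by
  obtain ⟨r, hr⟩ := RatFunc.denom_div_dvd p q
  intro h0
  rw [hr, eval_mul, h0, zero_mul] at hq
  exact hq rfl

theorem NoPoleAtZero.exists_eq_div {f : RatFunc F} (hf : NoPoleAtZero f) :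
    ∃ p q : F[X], q.eval 0 ≠ 0 ∧ f = algebraMap F[X] (RatFunc F) p / algebraMap F[X] (RatFunc F) q :=
  ⟨f.num, f.denom, hf, (RatFunc.num_div_denom f).symm⟩

theorem algebraMap_ne_zero_of_eval_ne_zero {q : F[X]} (hq : q.eval 0 ≠ 0) :
    algebraMap F[X] (RatFunc F) q ≠ 0 :=
  RatFunc.algebraMap_ne_zero fun h => hq (by simp [h])

theorem NoPoleAtZero.add {f g : RatFunc F} (hf : NoPoleAtZero f) (hg : NoPoleAtZero g) :
    NoPoleAtZero (f + g) := by
  obtain ⟨p, q, hq, rfl⟩ := hf.exists_eq_div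
  obtain ⟨p', q', hq', rfl⟩ := hg.exists_eq_div
  rw [div_add_div _ _ (algebraMap_ne_zero_of_eval_ne_zero hq)
    (algebraMap_ne_zero_of_eval_ne_zero hq'), ← map_mul, ← map_mul, ← map_mul, ← map_add]
  exact noPoleAtZero_div (by rw [eval_mul]; exact mul_ne_zero hq hq')

theorem NoPoleAtZero.mul {f g : RatFunc F} (hf : NoPoleAtZero f) (hg : NoPoleAtZero g) :
    NoPoleAtZero (f * g) := by
  obtain ⟨p, q, hq, rfl⟩ := hf.exists_eq_div
  obtain ⟨p', q', hq', rfl⟩ := hg.exists_eq_div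
  rw [div_mul_div_comm, ← map_mul, ← map_mul]
  exact noPoleAtZero_div (by rw [eval_mul]; exact mul_ne_zero hq hq')

theorem NoPoleAtZero.neg {f : RatFunc F} (hf : NoPoleAtZero f) : NoPoleAtZero (-f) := by
  obtain ⟨p, q, hq, rfl⟩ := hf.exists_eq_div
  rw [← neg_div, ← map_neg]
  exact noPoleAtZero_div hq

theorem noPoleAtZero_algebraMap (p : F[X]) : NoPoleAtZero (algebraMap F[X] (RatFunc F) p) := by
  simpa using noPoleAtZero_div (p := p) (q := 1) (by simp)

variable (F) in
def noPoleAtZeroSubring : Subring (RatFunc F) where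
  carrier := {f | NoPoleAtZero f}
  one_mem' := by simpa using noPoleAtZero_algebraMap (1 : F[X])
  zero_mem' := by simpa using noPoleAtZero_algebraMap (0 : F[X])
  mul_mem' := NoPoleAtZero.mul
  add_mem' := NoPoleAtZero.add
  neg_mem' := NoPoleAtZero.neg

theorem mem_noPoleAtZeroSubring {f : RatFunc F} : f ∈ noPoleAtZeroSubring F ↔ NoPoleAtZero f :=
  Iff.rfl

theorem X_mem_noPoleAtZeroSubring : RatFunc.X ∈ noPoleAtZeroSubring F := by
  rw [mem_noPoleAtZeroSubring]
  simpa using noPoleAtZero_algebraMap (F := F) X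

theorem isUnit_one_add_X_mul (g : noPoleAtZeroSubring F) :
    IsUnit (1 + ⟨RatFunc.X, X_mem_noPoleAtZeroSubring⟩ * g) := by
  obtain ⟨p, q, hq, hg⟩ := NoPoleAtZero.exists_eq_div g.2
  have hXp : (q + X * p).eval 0 ≠ 0 := by simpa using hq
  have h : 1 + RatFunc.X * (g : RatFunc F)
      = algebraMap F[X] (RatFunc F) (q + X * p) / algebraMap F[X] (RatFunc F) q := by
    rw [hg, map_add, map_mul, RatFunc.algebraMap_X, add_div,
      div_self (algebraMap_ne_zero_of_eval_ne_zero hq), mul_div_assoc]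
  refine isUnit_of_inv_mem ?_ ?_
  · simp only [Subring.coe_add, Subring.coe_one, Subring.coe_mul, h]
    exact div_ne_zero (algebraMap_ne_zero_of_eval_ne_zero hXp)
      (algebraMap_ne_zero_of_eval_ne_zero hq)
  · simp only [Subring.coe_add, Subring.coe_one, Subring.coe_mul, h, inv_div]
    exact noPoleAtZero_div hXp

theorem isUnit_add_X_mul {y : noPoleAtZeroSubring F} (hy : IsUnit y) (g : noPoleAtZeroSubring F) :
    IsUnit (y + ⟨RatFunc.X, X_mem_noPoleAtZeroSubring⟩ * g) := by
  obtain ⟨w, rfl⟩ := hy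
  have h : ↑w + ⟨RatFunc.X, X_mem_noPoleAtZeroSubring⟩ * g
      = w * (1 + ⟨RatFunc.X, X_mem_noPoleAtZeroSubring⟩ * (↑w⁻¹ * g)) := by
    rw [mul_add, mul_one, mul_left_comm, Units.mul_inv_cancel_left]
  exact h ▸ w.isUnit.mul (isUnit_one_add_X_mul _)

theorem isBigO_of_X_pow_dvd {k : ℕ} {f : noPoleAtZeroSubring F}
    (h : ⟨RatFunc.X, X_mem_noPoleAtZeroSubring⟩ ^ k ∣ f) : IsBigO k (f : RatFunc F) := by
  obtain ⟨g, rfl⟩ := h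
  exact ⟨g, g.2, by simp⟩

end NoPole

/-- If `C ≠ 0`, `C`, `C⁻¹` and the `c_i` have no pole at `0`, and
`v_I = C + α·∑_{i∈I} c_i`, then
`∏_{G ⊆ K} v_G^{(-1)^{|K|-|G|}} − 1 = O(α^{|K|})`. -/
theorem stmt_7 {F ι : Type*} [Field F] [DecidableEq ι] (K : Finset ι)
    (C : RatFunc F) (c : ι → RatFunc F)
    (hC0 : C ≠ 0) (hC : NoPoleAtZero C) (hCinv : NoPoleAtZero C⁻¹)
    (hc : ∀ i ∈ K, NoPoleAtZero (c i)) :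
    IsBigO K.card
      ((∏ G ∈ K.powerset,
          (C + RatFunc.X * ∑ i ∈ G, c i) ^ ((-1 : ℤ) ^ (K.card - G.card)))
        - 1) := by
  set A := noPoleAtZeroSubring F
  let x : A := ⟨RatFunc.X, X_mem_noPoleAtZeroSubring⟩
  let y : A := ⟨C, hC⟩
  let a : ι → A := fun i => if h : i ∈ K then ⟨c i, hc i h⟩ else 0
  let v : Finset ι → A := fun G => y + x * ∑ i ∈ G, a i
  have hv : ∀ G ⊆ K, C + RatFunc.X * ∑ i ∈ G, c i = A.subtype (v G) := fun G hG => by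
    simp only [v, map_add, map_mul, map_sum]
    congr 2
    exact sum_congr rfl fun i hi => by simp [a, hG hi]
  have hy : IsUnit y := isUnit_of_inv_mem hC0 hCinv
  obtain ⟨u, hu⟩ : IsUnit (subsetProdOfSign K (-1) v) :=
    IsUnit.prod_iff.mpr fun G _ => isUnit_add_X_mul hy _
  have hdvd : x ^ #K ∣ subsetProdOfSign K 1 v * ↑u⁻¹ - 1 := by
    have h := pow_card_dvd_subsetProdOfSign_sub x y a K
    rwa [← hu, ← Units.dvd_mul_right (u := u⁻¹), sub_mul, Units.mul_inv] at h
  convert isBigO_of_X_pow_dvd hdvd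
  rw [prod_zpow_neg_one_pow_eq_div, subsetProdOfSign_congr hv, subsetProdOfSign_congr hv,
    ← map_subsetProdOfSign, ← map_subsetProdOfSign, ← hu, div_eq_mul_inv,
    ← map_units_inv A.subtype]
  rfl
end

section
/- For any partition λ, the product over boxes □ of λ with leg-length 0 of (α·a(□) + ℓ(□) + α) equals α^{λ₁} · ∏_i m_i(λ^t)!, where a(□) and ℓ(□) are the arm-length and leg-length of □ in λ, and m_i(λ^t) is the number of parts of the conjugate λ^t equal to i. -/
open scoped BigOperators
open Polynomial

/-- Conjugate partition (0-indexed): `conjPart f c` is the height of the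
column of index `c`, i.e. the number of rows `j` with `f j ≥ c+1`. -/
def conjPart (f : ℕ →₀ ℕ) (c : ℕ) : ℕ :=
  (f.support.filter (fun j => c + 1 ≤ f j)).card

/-- The boxes of the Young diagram of `f` (0-indexed): pairs `(i, j)` with
`i < f j` (`i` = column, `j` = row). -/
def cells (f : ℕ →₀ ℕ) : Finset (ℕ × ℕ) :=
  f.support.biUnion (fun j => (Finset.range (f j)).image (fun i => (i, j)))

/-- Arm-length of the box `b = (i,j)`: `a(□) = λ_j − (i+1)` (0-indexed). -/
def armL (f : ℕ →₀ ℕ) (b : ℕ × ℕ) : ℕ := f b.2 - (b.1 + 1)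

/-- Leg-length of the box `b = (i,j)`: `ℓ(□) = λ^t_i − (j+1)` (0-indexed). -/
def legL (f : ℕ →₀ ℕ) (b : ℕ × ℕ) : ℕ := conjPart f b.1 - (b.2 + 1)

/-- `m_i(λ^t)`: the number of columns of `λ` of height `i`. -/
def multConj (f : ℕ →₀ ℕ) (i : ℕ) : ℕ :=
  ((Finset.range (f 0)).filter (fun c => conjPart f c = i)).card

/-!
The boxes of leg-length 0 are the tops of the columns, one for each column `i < λ₁`, and the
top box of column `i` contributes `α · (a(□) + 1)`. Since `c < λ^t_i ↔ i < λ_c`, the columns of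
height `c` are those with index in `[λ_c, λ_{c-1})`; the values `a(□) + 1` of their top boxes
are `λ_{c-1} - i`, which run through `1, …, m_c(λ^t)` and contribute `m_c(λ^t)!`.
-/

open Finset

theorem prod_Ico_tsub_eq_factorial (a b : ℕ) : ∏ i ∈ Ico a b, (b - i) = (b - a).factorial := by
  rw [prod_Ico_eq_prod_range, ← Nat.descFactorial_self, Nat.descFactorial_eq_prod_range]
  exact prod_congr rfl fun k _ => (Nat.sub_sub b a k).symm

theorem mem_cells {f : ℕ →₀ ℕ} {i j : ℕ} : (i, j) ∈ cells f ↔ i < f j := by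
  simp only [cells, mem_biUnion, mem_image, mem_range, Finsupp.mem_support_iff, Prod.mk.injEq]
  constructor
  · rintro ⟨_, _, _, hi, rfl, rfl⟩
    exact hi
  · intro h
    exact ⟨j, by omega, i, h, rfl, rfl⟩

theorem lt_conjPart_iff {f : ℕ →₀ ℕ} (hf : Antitone ⇑f) {c i : ℕ} :
    c < conjPart f i ↔ i < f c := by
  unfold conjPart
  constructor
  · intro h
    by_contra! hc
    have hsub : f.support.filter (fun j => i + 1 ≤ f j) ⊆ range c := fun j hj => by
      have hij := (Finset.mem_filter.1 hj).2
      by_contra! hjc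
      have := hf (not_lt.1 (mt mem_range.2 hjc))
      omega
    simpa using h.trans_le (card_le_card hsub)
  · intro h
    have hsub : range (c + 1) ⊆ f.support.filter (fun j => i + 1 ≤ f j) := fun j hj => by
      have := hf (Nat.lt_succ_iff.1 (mem_range.1 hj))
      simp only [Finset.mem_filter, Finsupp.mem_support_iff]
      omega
    simpa using card_le_card hsub

theorem lt_apply_conjPart_sub_one {f : ℕ →₀ ℕ} (hf : Antitone ⇑f) {i : ℕ} (hi : i < f 0) :
    i < f (conjPart f i - 1) := by
  have := (lt_conjPart_iff hf).2 hi
  exact (lt_conjPart_iff hf).1 (by omega)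

theorem filter_legL_eq_zero {f : ℕ →₀ ℕ} (hf : Antitone ⇑f) :
    (cells f).filter (fun b => legL f b = 0)
      = (range (f 0)).image (fun i => (i, conjPart f i - 1)) := by
  ext b
  obtain ⟨i, j⟩ := b
  rw [Finset.mem_filter]
  simp only [mem_image, mem_range, mem_cells, legL, Prod.mk.injEq]
  constructor
  · rintro ⟨hij, hleg⟩
    have hj := (lt_conjPart_iff hf).2 hij
    exact ⟨i, (lt_conjPart_iff hf).1 (by omega), rfl, by omega⟩
  · rintro ⟨i, hi, rfl, rfl⟩
    exact ⟨lt_apply_conjPart_sub_one hf hi, by omega⟩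

theorem filter_conjPart_eq_Ico {f : ℕ →₀ ℕ} (hf : Antitone ⇑f) (c : ℕ) :
    (range (f 0)).filter (fun i => conjPart f i = c) = Ico (f c) (f (c - 1)) := by
  ext i
  have hc := lt_conjPart_iff hf (c := c) (i := i)
  have hc' := lt_conjPart_iff hf (c := c - 1) (i := i)
  have h0 := lt_conjPart_iff hf (c := 0) (i := i)
  simp only [Finset.mem_filter, mem_range, mem_Ico]
  rcases c with _ | c <;> simp only [Nat.zero_sub, Nat.add_sub_cancel] at hc' ⊢ <;> omega

theorem multConj_eq_tsub {f : ℕ →₀ ℕ} (hf : Antitone ⇑f) (c : ℕ) :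
    multConj f c = f (c - 1) - f c := by
  rw [multConj, filter_conjPart_eq_Ico hf, Nat.card_Ico]

theorem prod_range_tsub_eq_finprod_factorial_multConj {f : ℕ →₀ ℕ} (hf : Antitone ⇑f) :
    ∏ i ∈ range (f 0), (f (conjPart f i - 1) - i) = ∏ᶠ c, (multConj f c).factorial := by
  have hsupp : Function.mulSupport (fun c => (multConj f c).factorial)
      ⊆ (range (f 0)).image (conjPart f) := by
    intro c hc
    have hpos : 0 < multConj f c := Nat.pos_of_ne_zero fun h => hc (by simp [h])
    obtain ⟨i, hi⟩ := card_pos.1 hpos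
    rw [Finset.mem_filter] at hi
    exact mem_image.2 ⟨i, hi⟩
  rw [finprod_eq_prod_of_mulSupport_subset _ hsupp,
    ← prod_fiberwise_of_maps_to (g := conjPart f) fun i hi => mem_image_of_mem _ hi]
  refine prod_congr rfl fun c _ => ?_
  rw [prod_congr rfl fun i hi => by rw [(Finset.mem_filter.1 hi).2], filter_conjPart_eq_Ico hf,
    prod_Ico_tsub_eq_factorial, multConj_eq_tsub hf]

/-- `∏_{□∈λ, ℓ(□)=0} (α·a(□) + ℓ(□) + α) = α^{λ₁} · ∏_i m_i(λ^t)!`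
(as polynomials in `α`). -/
theorem stmt_13 (f : ℕ →₀ ℕ) (hf : Antitone ⇑f) :
    (∏ b ∈ (cells f).filter (fun b => legL f b = 0),
        ((X : ℚ[X]) * (armL f b : ℚ[X]) + (legL f b : ℚ[X]) + X))
      = X ^ (f 0) * ((∏ᶠ i : ℕ, (multConj f i).factorial : ℕ) : ℚ[X]) := by
  have htop : ∀ i ∈ range (f 0),
      (X : ℚ[X]) * (armL f (i, conjPart f i - 1) : ℚ[X]) + (legL f (i, conjPart f i - 1) : ℚ[X]) + X
        = X * ((f (conjPart f i - 1) - i : ℕ) : ℚ[X]) := by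
    intro i hi
    have := lt_apply_conjPart_sub_one hf (mem_range.1 hi)
    have hleg : legL f (i, conjPart f i - 1) = 0 := by simp only [legL]; omega
    have harm : f (conjPart f i - 1) - i = armL f (i, conjPart f i - 1) + 1 := by
      simp only [armL]; omega
    rw [hleg, harm]
    push_cast
    ring
  rw [filter_legL_eq_zero hf, prod_image fun _ _ _ _ h => congrArg Prod.fst h,
    prod_congr rfl htop, prod_mul_distrib, prod_const, card_range, ← Nat.cast_prod,
    prod_range_tsub_eq_finprod_factorial_multConj hf]
end

section
/- Let (u_I)_{I⊆[r]} be a family of elements of a commutative differential setting where each u_I is a polynomial in x₁,…,x_N, and let κ_I denote partial cumulants. Then ∑_{π∈P([r])} μ(π,{[r]}) · D_{1,2}(u_B : B ∈ π) = −(1/2) ∑_{m=1}^N ∑_{∅⊊I⊊[r]} (x_m ∂/∂x_m κ_I)(x_m ∂/∂x_m κ_{I^c}), where I^c = [r]∖I, D_{1,2} is defined by D_{1,2}(f₁,…,f_k) = ∑_m ∑_{i<j} f₁···(x_m∂_m f_i)···(x_m∂_m f_j)···f_k (and D_{1,2} of a single function is 0), and κ_I = ∑_{π∈P(I)} μ(π,{I})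 ∏_{B∈π} u_B. -/
open scoped BigOperators

/-- Partial cumulants `κ_I = ∑_{π∈P(I)} μ(π,{I}) ∏_{B∈π} u_B` of a family of
multivariate polynomials, with `μ(π,{I}) = (-1)^(#(π)-1)(#(π)-1)!`. -/
noncomputable def cumP (N r : ℕ) (u : Finset (Fin r) → MvPolynomial (Fin N) ℚ)
    (I : Finset (Fin r)) : MvPolynomial (Fin N) ℚ :=
  ∑ᶠ π : Finpartition I,
    (((-1 : ℤ) ^ (π.parts.card - 1) * (π.parts.card - 1).factorial : ℤ)) •
      ∏ B ∈ π.parts, u B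

/-- `D_{1,2}` applied to the family `(g b)_{b ∈ s}` (a sum over unordered
pairs of distinct indices, written as half the sum over ordered pairs):
`D_{1,2}(f₁,…,f_k) = ∑_m ∑_{i<j} f₁···(x_m∂_m f_i)···(x_m∂_m f_j)···f_k`. -/
noncomputable def D12 (N : ℕ) {β : Type*} [DecidableEq β] (s : Finset β)
    (g : β → MvPolynomial (Fin N) ℚ) : MvPolynomial (Fin N) ℚ :=
  MvPolynomial.C (1 / 2 : ℚ) *
    ∑ m : Fin N, ∑ i ∈ s, ∑ j ∈ s \ {i},
      ∏ l ∈ s,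
        if l = i ∨ l = j then
          MvPolynomial.X m * MvPolynomial.pderiv m (g l)
        else g l

/-!
With `D = x_m ∂_m`, the Leibniz rule writes `D κ_I` as a signed sum over partitions of `I` with one
marked block, so `(D κ_I)(D κ_{Iᶜ})` is a sum over partitions `π` of `[r]` with two marked blocks
`B₁ ≠ B₂` and a subfamily `S ⊆ π` (the blocks covering `I`) with `B₁ ∈ S`, `B₂ ∉ S`. For fixed
`π, B₁, B₂` the coefficient is `∑_S μ(|S|) μ(|π| - |S|)`; with `n = |π| - 2`, each of the `C(n, j)`
families with `|S| = j + 1` contributes `(-1)^n n!`, so the sum is `(-1)^n (n+1)! = -μ(|π|)`.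
The terms `I = ∅` and `I = [r]` vanish because `κ_∅ = 1`.
-/

open Finset

def mobiusCoeff (n : ℕ) : ℤ := (-1) ^ (n - 1) * (n - 1).factorial

lemma mobiusCoeff_succ (n : ℕ) : mobiusCoeff (n + 1) = (-1) ^ n * n.factorial := by
  simp [mobiusCoeff]

lemma choose_mul_mobiusCoeff_mul_mobiusCoeff {n j : ℕ} (h : j ≤ n) :
    (n.choose j : ℤ) * (mobiusCoeff (j + 1) * mobiusCoeff (n - j + 1)) =
      (-1) ^ n * n.factorial := by
  have hfact : (n.choose j * j.factorial * (n - j).factorial : ℤ) = n.factorial := by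
    exact_mod_cast Nat.choose_mul_factorial_mul_factorial h
  have hsign : (-1 : ℤ) ^ j * (-1) ^ (n - j) = (-1) ^ n := by
    rw [← pow_add, Nat.add_sub_cancel' h]
  rw [mobiusCoeff_succ, mobiusCoeff_succ, ← hfact, ← hsign]
  ring

lemma sum_range_choose_mul_mobiusCoeff (n : ℕ) :
    ∑ j ∈ range (n + 1), n.choose j • (mobiusCoeff (j + 1) * mobiusCoeff (n + 1 - j)) =
      -mobiusCoeff (n + 2) := by
  rw [sum_congr rfl fun j hj => by
    rw [nsmul_eq_mul, Nat.sub_add_comm (Nat.lt_succ_iff.mp (mem_range.mp hj)),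
      choose_mul_mobiusCoeff_mul_mobiusCoeff (Nat.lt_succ_iff.mp (mem_range.mp hj))]]
  rw [sum_const, card_range, mobiusCoeff_succ, Nat.factorial_succ, nsmul_eq_mul]
  push_cast
  ring

lemma sum_powerset_filter_mobiusCoeff_mul_mobiusCoeff {β : Type*} [DecidableEq β]
    {s : Finset β} {a b : β} (ha : a ∈ s) (hb : b ∈ s) (hab : a ≠ b) :
    ∑ T ∈ s.powerset with a ∈ T ∧ b ∉ T, mobiusCoeff #T * mobiusCoeff (#s - #T) =
      -mobiusCoeff #s := by
  set t := (s.erase a).erase b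
  have hat : a ∉ t := fun h => (mem_erase.mp (mem_erase.mp h).2).1 rfl
  have hcard : #s = #t + 2 := by
    have := one_lt_card.mpr ⟨a, ha, b, hb, hab⟩
    rw [card_erase_of_mem (mem_erase.mpr ⟨hab.symm, hb⟩), card_erase_of_mem ha]
    omega
  have hreindex : ∑ T ∈ s.powerset with a ∈ T ∧ b ∉ T, mobiusCoeff #T * mobiusCoeff (#s - #T) =
      ∑ U ∈ t.powerset, mobiusCoeff (#U + 1) * mobiusCoeff (#t + 1 - #U) := by
    refine sum_nbij' (fun T => T.erase a) (insert a) ?_ ?_ ?_ ?_ ?_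
    · intro T hT
      simp only [mem_filter, mem_powerset] at hT ⊢
      intro x hx
      simp only [mem_erase, t] at hx ⊢
      exact ⟨fun h => hT.2.2 (h ▸ hx.2), hx.1, hT.1 hx.2⟩
    · intro U hU
      simp only [mem_filter, mem_powerset, mem_insert, true_or, true_and] at hU ⊢
      refine ⟨insert_subset ha fun x hx => (mem_erase.mp (mem_erase.mp (hU hx)).2).2, ?_⟩
      rintro (h | h)
      · exact hab h.symm
      · exact (mem_erase.mp (hU h)).1 rfl
    · intro T hT
      exact insert_erase (mem_filter.mp hT).2.1
    · intro U hU
      exact erase_insert fun h => hat (mem_powerset.mp hU h)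
    · intro T hT
      rw [← card_erase_add_one (mem_filter.mp hT).2.1, hcard]
      congr 2
      omega
  rw [hreindex, sum_powerset_apply_card (fun j => mobiusCoeff (j + 1) * mobiusCoeff (#t + 1 - j)),
    sum_range_choose_mul_mobiusCoeff, hcard]

lemma sum_powerset_sum_sum_sdiff {β M : Type*} [DecidableEq β] [AddCommMonoid M]
    (s : Finset β) (f : Finset β → β → β → M) :
    ∑ T ∈ s.powerset, ∑ a ∈ T, ∑ b ∈ s \ T, f T a b =
      ∑ a ∈ s, ∑ b ∈ s \ {a}, ∑ T ∈ s.powerset with a ∈ T ∧ b ∉ T, f T a b := by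
  rw [sum_comm' (t' := s) (s' := fun a => s.powerset.filter (a ∈ ·)) (by
    intro T a
    simp only [mem_powerset, mem_filter]
    exact ⟨fun h => ⟨⟨h.1, h.2⟩, h.1 h.2⟩, fun h => h.1⟩)]
  refine sum_congr rfl fun a _ => sum_comm' fun T b => ?_
  simp only [mem_powerset, mem_filter, mem_sdiff, mem_singleton]
  exact ⟨fun h => ⟨⟨h.1.1, h.1.2, h.2.2⟩, h.2.1, fun hba => h.2.2 (hba ▸ h.1.2)⟩,
    fun h => ⟨⟨h.1.1, h.1.2.1⟩, h.2.1, h.1.2.2⟩⟩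

theorem sum_powerset_mobiusCoeff_smul_sum_sum_sdiff {β M : Type*} [DecidableEq β]
    [AddCommGroup M] (s : Finset β) (F : β → β → M) :
    ∑ T ∈ s.powerset, (mobiusCoeff #T * mobiusCoeff #(s \ T)) • ∑ a ∈ T, ∑ b ∈ s \ T, F a b =
      -(mobiusCoeff #s • ∑ a ∈ s, ∑ b ∈ s \ {a}, F a b) := by
  simp only [smul_sum]
  rw [sum_powerset_sum_sum_sdiff, ← sum_neg_distrib]
  refine sum_congr rfl fun a ha => ?_
  rw [← sum_neg_distrib]
  refine sum_congr rfl fun b hb => ?_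
  obtain ⟨hbs, hba⟩ := mem_sdiff.mp hb
  rw [← sum_smul, ← neg_smul, ← sum_powerset_filter_mobiusCoeff_mul_mobiusCoeff ha hbs
    (fun h => hba (mem_singleton.mpr h.symm))]
  refine congrArg (· • F a b) (sum_congr rfl fun T hT => ?_)
  rw [card_sdiff_of_subset (mem_powerset.mp (mem_filter.mp hT).1)]

section PartsOfPartitions

variable {α : Type*} [Fintype α] [DecidableEq α]

-- Set families rather than `Finpartition`s, so that partitions of different sets can be compared.
def partsOfPartitions (I : Finset α) : Finset (Finset (Finset α)) :=
  univ.filter fun S => S.SupIndep id ∧ S.sup id = I ∧ ⊥ ∉ S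

variable {I J : Finset α} {S S₁ S₂ π : Finset (Finset α)}

lemma mem_partsOfPartitions : S ∈ partsOfPartitions I ↔ S.SupIndep id ∧ S.sup id = I ∧ ⊥ ∉ S := by
  simp [partsOfPartitions]

lemma sum_finpartition_eq_sum_partsOfPartitions {M : Type*} [AddCommMonoid M] (I : Finset α)
    (F : Finset (Finset α) → M) :
    ∑ P : Finpartition I, F P.parts = ∑ S ∈ partsOfPartitions I, F S :=
  sum_bij' (fun P _ => P.parts)
    (fun S hS => ⟨S, (mem_partsOfPartitions.mp hS).1, (mem_partsOfPartitions.mp hS).2.1,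
      (mem_partsOfPartitions.mp hS).2.2⟩)
    (fun P _ => mem_partsOfPartitions.mpr ⟨P.supIndep, P.sup_parts, P.bot_notMem⟩)
    (fun _ _ => mem_univ _) (fun _ _ => rfl) (fun _ _ => rfl) (fun _ _ => rfl)

lemma subset_of_mem_partsOfPartitions (hS : S ∈ partsOfPartitions I) {B : Finset α}
    (hB : B ∈ S) : B ⊆ I :=
  (mem_partsOfPartitions.mp hS).2.1 ▸ le_sup (f := id) hB

lemma disjoint_of_mem_partsOfPartitions (h₁ : S₁ ∈ partsOfPartitions I)
    (h₂ : S₂ ∈ partsOfPartitions J) (hIJ : Disjoint I J) : Disjoint S₁ S₂ :=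
  disjoint_left.mpr fun _ hB₁ hB₂ => (mem_partsOfPartitions.mp h₁).2.2 <|
    (disjoint_self.mp ((hIJ.mono (subset_of_mem_partsOfPartitions h₁ hB₁)
      (subset_of_mem_partsOfPartitions h₂ hB₂)))) ▸ hB₁

lemma union_mem_partsOfPartitions (h₁ : S₁ ∈ partsOfPartitions I)
    (h₂ : S₂ ∈ partsOfPartitions J) (hIJ : Disjoint I J) :
    S₁ ∪ S₂ ∈ partsOfPartitions (I ∪ J) := by
  obtain ⟨hind₁, hsup₁, hbot₁⟩ := mem_partsOfPartitions.mp h₁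
  obtain ⟨hind₂, hsup₂, hbot₂⟩ := mem_partsOfPartitions.mp h₂
  refine mem_partsOfPartitions.mpr ⟨?_, by rw [sup_union, hsup₁, hsup₂]; rfl,
    fun h => (mem_union.mp h).elim hbot₁ hbot₂⟩
  rw [supIndep_iff_pairwiseDisjoint, coe_union] at *
  refine hind₁.union hind₂ fun B₁ hB₁ B₂ hB₂ _ => ?_
  exact hIJ.mono (subset_of_mem_partsOfPartitions h₁ hB₁) (subset_of_mem_partsOfPartitions h₂ hB₂)

lemma mem_partsOfPartitions_sup (hπ : π ∈ partsOfPartitions J) (hS : S ⊆ π) :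
    S ∈ partsOfPartitions (S.sup id) := by
  obtain ⟨hind, -, hbot⟩ := mem_partsOfPartitions.mp hπ
  exact mem_partsOfPartitions.mpr ⟨hind.subset hS, rfl, fun h => hbot (hS h)⟩

lemma sdiff_mem_partsOfPartitions (hπ : π ∈ partsOfPartitions J) (hS : S ⊆ π) :
    π \ S ∈ partsOfPartitions (J \ S.sup id) := by
  obtain ⟨hind, hsup, hbot⟩ := mem_partsOfPartitions.mp hπ
  refine mem_partsOfPartitions.mpr ⟨hind.subset sdiff_subset, ?_, fun h => hbot (mem_sdiff.mp h).1⟩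
  have hdisj : Disjoint (S.sup id) ((π \ S).sup id) :=
    hind.disjoint_sup_sup hS sdiff_subset disjoint_sdiff
  rw [← hsup, ← union_sdiff_of_subset hS, sup_union, union_sdiff_of_subset hS]
  exact (union_sdiff_cancel_left hdisj).symm

theorem sum_sum_partsOfPartitions_compl {M : Type*} [AddCommMonoid M]
    (G : Finset (Finset α) → Finset (Finset α) → M) :
    ∑ I : Finset α, ∑ S₁ ∈ partsOfPartitions I, ∑ S₂ ∈ partsOfPartitions Iᶜ, G S₁ S₂ =
      ∑ π ∈ partsOfPartitions univ, ∑ S ∈ π.powerset, G S (π \ S) := by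
  simp only [← sum_product', sum_sigma']
  refine sum_nbij' (fun x => ⟨x.2.1 ∪ x.2.2, x.2.1⟩) (fun y => ⟨y.2.sup id, y.2, y.1 \ y.2⟩)
    ?_ ?_ ?_ ?_ ?_
  · rintro ⟨I, S₁, S₂⟩ h
    simp only [mem_sigma, mem_product] at h
    simp only [mem_sigma, mem_powerset]
    refine ⟨?_, subset_union_left⟩
    simpa using union_mem_partsOfPartitions h.2.1 h.2.2 disjoint_compl_right
  · rintro ⟨π, S⟩ h
    simp only [mem_sigma, mem_powerset] at h
    simp only [mem_sigma, mem_product, mem_univ, true_and]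
    refine ⟨mem_partsOfPartitions_sup h.1 h.2, ?_⟩
    rw [compl_eq_univ_sdiff]
    exact sdiff_mem_partsOfPartitions h.1 h.2
  · rintro ⟨I, S₁, S₂⟩ h
    simp only [mem_sigma, mem_product] at h
    simp [(mem_partsOfPartitions.mp h.2.1).2.1,
      union_sdiff_cancel_left (disjoint_of_mem_partsOfPartitions h.2.1 h.2.2 disjoint_compl_right)]
  · rintro ⟨π, S⟩ h
    simp only [mem_sigma, mem_powerset] at h
    simp [union_sdiff_of_subset h.2]
  · rintro ⟨I, S₁, S₂⟩ h
    simp only [mem_sigma, mem_product] at h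
    simp [union_sdiff_cancel_left
      (disjoint_of_mem_partsOfPartitions h.2.1 h.2.2 disjoint_compl_right)]

end PartsOfPartitions

lemma prod_ite_eq_mul_prod_ite_eq {β M : Type*} [DecidableEq β] [CommMonoid M]
    {S₁ S₂ : Finset β} (hS : Disjoint S₁ S₂) {b₁ b₂ : β} (h₁ : b₁ ∈ S₁) (h₂ : b₂ ∈ S₂)
    (f g : β → M) :
    (∏ l ∈ S₁, if l = b₁ then g l else f l) * (∏ l ∈ S₂, if l = b₂ then g l else f l) =
      ∏ l ∈ S₁ ∪ S₂, if l = b₁ ∨ l = b₂ then g l else f l := by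
  rw [prod_union hS]
  congr 1 <;> refine prod_congr rfl fun l hl => ?_
  · have : l ≠ b₂ := fun h => disjoint_left.mp hS hl (h ▸ h₂)
    simp [this]
  · have : l ≠ b₁ := fun h => disjoint_left.mp hS (h ▸ h₁) hl
    simp [this]

namespace Derivation

variable {R A β : Type*} [CommSemiring R] [CommRing A] [Algebra R A] [DecidableEq β]
  (D : Derivation R A A)

theorem leibniz_prod (s : Finset β) (f : β → A) :
    D (∏ b ∈ s, f b) = ∑ b ∈ s, ∏ c ∈ s, if c = b then D (f c) else f c := by
  induction s using Finset.induction_on with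
  | empty => simp
  | @insert a s ha ih =>
    rw [prod_insert ha, leibniz, ih, sum_insert ha, prod_insert ha, if_pos rfl, smul_eq_mul,
      smul_eq_mul, mul_sum, add_comm]
    congr 1
    · rw [prod_congr rfl fun c hc => if_neg (ne_of_mem_of_not_mem hc ha), mul_comm]
    · refine sum_congr rfl fun b hb => ?_
      rw [prod_insert ha, if_neg (ne_of_mem_of_not_mem hb ha).symm]

end Derivation

section Cumulant

variable {α R A : Type*} [DecidableEq α] [CommSemiring R] [CommRing A] [Algebra R A]

def cumulant (u : Finset α → A) (I : Finset α) : A :=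
  ∑ P : Finpartition I, mobiusCoeff #P.parts • ∏ B ∈ P.parts, u B

variable (u : Finset α → A)

lemma cumulant_empty : cumulant u ∅ = 1 := by
  have : Unique (Finpartition (∅ : Finset α)) := inferInstanceAs (Unique (Finpartition ⊥))
  rw [cumulant, Fintype.sum_unique, Finpartition.parts_eq_empty_iff.mpr rfl]
  simp [mobiusCoeff]

variable [Fintype α] (D : Derivation R A A)

lemma map_cumulant (I : Finset α) :
    D (cumulant u I) = ∑ S ∈ partsOfPartitions I,
      mobiusCoeff #S • ∑ B ∈ S, ∏ l ∈ S, if l = B then D (u l) else u l := by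
  rw [cumulant, sum_finpartition_eq_sum_partsOfPartitions I
    (fun S => mobiusCoeff #S • ∏ B ∈ S, u B), map_sum]
  simp only [map_zsmul, D.leibniz_prod]

lemma map_cumulant_mul_map_cumulant_compl (I : Finset α) :
    D (cumulant u I) * D (cumulant u Iᶜ) =
      ∑ S₁ ∈ partsOfPartitions I, ∑ S₂ ∈ partsOfPartitions Iᶜ,
        (mobiusCoeff #S₁ * mobiusCoeff #S₂) • ∑ B₁ ∈ S₁, ∑ B₂ ∈ S₂,
          ∏ l ∈ S₁ ∪ S₂, if l = B₁ ∨ l = B₂ then D (u l) else u l := by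
  rw [map_cumulant, map_cumulant, sum_mul_sum]
  refine sum_congr rfl fun S₁ hS₁ => sum_congr rfl fun S₂ hS₂ => ?_
  rw [smul_mul_smul_comm, sum_mul_sum]
  refine congrArg _ (sum_congr rfl fun B₁ hB₁ => sum_congr rfl fun B₂ hB₂ => ?_)
  exact prod_ite_eq_mul_prod_ite_eq
    (disjoint_of_mem_partsOfPartitions hS₁ hS₂ disjoint_compl_right) hB₁ hB₂ _ _

theorem sum_finpartition_mobiusCoeff_smul_sum_pairs :
    ∑ P : Finpartition (univ : Finset α), mobiusCoeff #P.parts •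
      ∑ B₁ ∈ P.parts, ∑ B₂ ∈ P.parts \ {B₁},
        ∏ l ∈ P.parts, (if l = B₁ ∨ l = B₂ then D (u l) else u l) =
      -∑ I ∈ univ with I ≠ ∅ ∧ I ≠ univ, D (cumulant u I) * D (cumulant u Iᶜ) := by
  have hproper : ∑ I ∈ univ with I ≠ ∅ ∧ I ≠ univ, D (cumulant u I) * D (cumulant u Iᶜ) =
      ∑ I, D (cumulant u I) * D (cumulant u Iᶜ) := by
    refine sum_filter_of_ne fun I _ hI => ?_
    constructor <;> rintro rfl <;> simp [cumulant_empty] at hI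
  rw [hproper, sum_finpartition_eq_sum_partsOfPartitions univ (fun S => mobiusCoeff #S •
      ∑ B₁ ∈ S, ∑ B₂ ∈ S \ {B₁}, ∏ l ∈ S, (if l = B₁ ∨ l = B₂ then D (u l) else u l))]
  simp only [map_cumulant_mul_map_cumulant_compl, sum_sum_partsOfPartitions_compl]
  rw [← sum_neg_distrib]
  refine sum_congr rfl fun π _ => ?_
  rw [← neg_neg (mobiusCoeff #π • _), ← sum_powerset_mobiusCoeff_smul_sum_sum_sdiff]
  refine congrArg _ (sum_congr rfl fun S hS => ?_)
  rw [union_sdiff_of_subset (mem_powerset.mp hS)]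

end Cumulant

/-- `∑_{π∈P([r])} μ(π,{[r]}) · D_{1,2}(u_B : B ∈ π)
  = −(1/2) ∑_m ∑_{∅⊊I⊊[r]} (x_m ∂_m κ_I)(x_m ∂_m κ_{I^c})`. -/
theorem stmt_17 (N r : ℕ) (u : Finset (Fin r) → MvPolynomial (Fin N) ℚ) :
    (∑ᶠ π : Finpartition (Finset.univ : Finset (Fin r)),
        (((-1 : ℤ) ^ (π.parts.card - 1) * (π.parts.card - 1).factorial : ℤ)) •
          D12 N π.parts u)
      = -(MvPolynomial.C (1 / 2 : ℚ) *
          ∑ m : Fin N,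
            ∑ I ∈ Finset.univ.filter
                (fun I : Finset (Fin r) => I ≠ ∅ ∧ I ≠ Finset.univ),
              (MvPolynomial.X m * MvPolynomial.pderiv m (cumP N r u I)) *
                (MvPolynomial.X m * MvPolynomial.pderiv m (cumP N r u Iᶜ))) := by
  have hcumP (I : Finset (Fin r)) : cumP N r u I = cumulant u I := finsum_eq_sum_of_fintype _
  have hpair (m : Fin N) := sum_finpartition_mobiusCoeff_smul_sum_pairs u
    ((MvPolynomial.X m : MvPolynomial (Fin N) ℚ) • MvPolynomial.pderiv m)
  simp only [Derivation.smul_apply, smul_eq_mul, ← hcumP] at hpair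
  rw [finsum_eq_sum_of_fintype, ← mul_neg, ← sum_neg_distrib]
  simp only [← hpair, D12, ← mul_smul_comm, ← mul_sum]
  rw [sum_comm (s := univ)]
  simp only [smul_sum, mobiusCoeff]
end

section
/- For any partitions λ¹,…,λ^r, any g ∈ [r], and any box b of λ^g, the arm-length of b in the entry-wise sum λ^{[r]} = λ¹ ⊕ ··· ⊕ λ^r decomposes as a_{[r]}(b) = ∑_{i=1}^r a_i(b), where for the row index ρ of b: a_g(b) is the arm-length of b in λ^g; for i < g, a_i(b) is the number of boxes in row ρ of λ^i whose column in λ^i is strictly shorter than the column of b in λ^g; and for i > g, a_i(b) is the number of boxes in row ρ of λ^i whose column in λ^i has height at most the height of the column of b in λ^g. Here boxes of λ^{[r]} are identified with boxes of the λ^i by sorting all columns of λ¹,…,λ^r in decreasing order of height, breaking ties by placing columns of λ^{i} before those of λ^{j} when i < j; moreover under this identification the leg-length of b in λ^{[r]} equals its leg-length in λ^g. -/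
open scoped BigOperators

/-! Write `h` for the height of the column of `b = (c, ρ)` in `λ^g`. The duality
`c < λ_ρ ↔ ρ < λᵗ_c` shows that the columns of `λ^i` of height `> h` are the first `λ^i_h`
ones, those of height exactly `h` have indices in `[λ^i_h, λ^i_{h-1})`, and the boxes of row `ρ`
whose column has height `≤ h` (resp. `< h`) are those in columns `[λ^i_h, λ^i_ρ)`
(resp. `[λ^i_{h-1}, λ^i_ρ)`). Hence the column of `b` in `λ^{[r]}` is
`c' = ∑_{i<g} λ^i_{h-1} + c + ∑_{i>g} λ^i_h`, which lies in `[Λ_h, Λ_{h-1})` for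
`Λ = ∑ λ^i`, so its height is `h`; and `Λ_ρ - (c' + 1)` splits termwise into the claimed
sum. -/

open Finset

section Conjugate

variable {f : ℕ →₀ ℕ}

theorem lt_apply_iff_lt_conjPart (hf : Antitone ⇑f) (c ρ : ℕ) :
    c < f ρ ↔ ρ < conjPart f c := by
  unfold conjPart
  constructor
  · intro h
    have hsub : range (ρ + 1) ⊆ f.support.filter (fun j => c + 1 ≤ f j) := by
      intro j hj
      have : f ρ ≤ f j := hf (Nat.lt_succ_iff.mp (mem_range.mp hj))
      simp only [mem_filter, Finsupp.mem_support_iff]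
      omega
    simpa using card_le_card hsub
  · intro h
    by_contra! hcon
    have hsub : f.support.filter (fun j => c + 1 ≤ f j) ⊆ range ρ := by
      intro j hj
      simp only [mem_filter] at hj
      by_contra hj'
      have : f j ≤ f ρ := hf (by simpa using hj')
      omega
    simpa using (card_le_card hsub).trans_lt' h

theorem conjPart_eq_of_apply_le_of_lt (hf : Antitone ⇑f) {k x : ℕ} (hk : 0 < k)
    (hle : f k ≤ x) (hlt : x < f (k - 1)) : conjPart f x = k := by
  have := (lt_apply_iff_lt_conjPart hf x (k - 1)).mp hlt
  have := (lt_apply_iff_lt_conjPart hf x k).not.mp (by omega)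
  omega

theorem filter_range_lt_conjPart (hf : Antitone ⇑f) {a k : ℕ} (hak : a ≤ k) :
    (range (f a)).filter (fun x => k < conjPart f x) = range (f k) := by
  ext x
  have := hf hak
  simp only [mem_filter, mem_range, ← lt_apply_iff_lt_conjPart hf]
  omega

theorem card_filter_range_lt_conjPart (hf : Antitone ⇑f) {a k : ℕ} (hak : a ≤ k) :
    ((range (f a)).filter (fun x => k < conjPart f x)).card = f k := by
  rw [filter_range_lt_conjPart hf hak, card_range]

theorem card_filter_range_conjPart_le (hf : Antitone ⇑f) {a k : ℕ} (hak : a ≤ k) :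
    ((range (f a)).filter (fun x => conjPart f x ≤ k)).card = f a - f k := by
  have := card_filter_add_card_filter_not (s := range (f a))
    (fun x => k < conjPart f x)
  simp only [filter_range_lt_conjPart hf hak, card_range, not_lt] at this
  omega

theorem card_filter_range_conjPart_lt (hf : Antitone ⇑f) {a k : ℕ} (hak : a < k) :
    ((range (f a)).filter (fun x => conjPart f x < k)).card = f a - f (k - 1) := by
  rw [← card_filter_range_conjPart_le hf (Nat.le_sub_one_of_lt hak)]
  congr 1
  exact filter_congr fun x _ => by omega

theorem card_filter_range_conjPart_eq (hf : Antitone ⇑f) {k : ℕ} (hk : 0 < k) :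
    ((range (f 0)).filter (fun x => conjPart f x = k)).card = f (k - 1) - f k := by
  have hIco : (range (f 0)).filter (fun x => conjPart f x = k) = Ico (f k) (f (k - 1)) := by
    ext x
    have := lt_apply_iff_lt_conjPart hf x (k - 1)
    have := lt_apply_iff_lt_conjPart hf x k
    have := hf (Nat.zero_le (k - 1))
    simp only [mem_filter, mem_range, mem_Ico]
    omega
  rw [hIco, Nat.card_Ico]

theorem apply_conjPart_le_and_lt_apply (hf : Antitone ⇑f) {c ρ : ℕ} (hc : c < f ρ) :
    f (conjPart f c) ≤ c ∧ c < f (conjPart f c - 1) := by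
  have := (lt_apply_iff_lt_conjPart hf c ρ).mp hc
  refine ⟨not_lt.mp fun hlt => ?_, (lt_apply_iff_lt_conjPart hf c _).mpr (by omega)⟩
  exact lt_irrefl _ ((lt_apply_iff_lt_conjPart hf c _).mp hlt)

end Conjugate

theorem Finsupp.antitone_finset_sum {ι α M : Type*} [Preorder α] [AddCommMonoid M]
    [PartialOrder M] [IsOrderedAddMonoid M] (s : Finset ι) (f : ι → α →₀ M)
    (hf : ∀ i, Antitone ⇑(f i)) : Antitone ⇑(∑ i ∈ s, f i) := by
  intro a b hab
  simp only [Finsupp.finsetSum_apply]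
  exact Finset.sum_le_sum fun i _ => hf i hab

theorem Finset.sum_eq_sum_filter_lt_add_add_sum_filter_gt {ι M : Type*} [Fintype ι]
    [LinearOrder ι] [AddCommMonoid M] (v : ι → M) (g : ι) :
    ∑ i, v i =
      ∑ i ∈ univ.filter (· < g), v i + v g + ∑ i ∈ univ.filter (g < ·), v i := by
  rw [← sum_filter_add_sum_filter_not univ (· < g), add_assoc]
  congr 1
  rw [← sum_insert (s := univ.filter (g < ·)) (by simp)]
  exact sum_congr (by ext i; simp [le_iff_eq_or_lt, eq_comm]) fun _ _ => rfl

section MergedIndex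

variable {ι : Type*} [Fintype ι] [LinearOrder ι] (g : ι) {u v w : ι → ℕ} {c : ℕ}

/-- The column of `λ^{[r]}` receiving column `c` of `λ^g`, when `v i` columns of each
`λ^i` with `i < g` and `u i` columns of each `λ^i` with `i > g` precede it. -/
def mergedIndex (v : ι → ℕ) (c : ℕ) (u : ι → ℕ) : ℕ :=
  ∑ i ∈ univ.filter (· < g), v i + c + ∑ i ∈ univ.filter (g < ·), u i

theorem sum_add_sum_tsub_add_tsub_eq_mergedIndex (hc : u g ≤ c) (huv : ∀ i, u i ≤ v i) :
    ∑ i, u i + ∑ i ∈ univ.filter (· < g), (v i - u i) + (c - u g) =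
      mergedIndex g v c u := by
  have := sum_le_sum (s := univ.filter (· < g)) fun i _ => huv i
  rw [mergedIndex, sum_tsub_distrib _ fun i _ => huv i,
    sum_eq_sum_filter_lt_add_add_sum_filter_gt u g]
  omega

theorem sum_le_mergedIndex (hc : u g ≤ c) (huv : ∀ i, u i ≤ v i) :
    ∑ i, u i ≤ mergedIndex g v c u := by
  have := sum_le_sum (s := univ.filter (· < g)) fun i _ => huv i
  rw [mergedIndex, sum_eq_sum_filter_lt_add_add_sum_filter_gt u g]
  omega

theorem mergedIndex_lt_sum (hc : c < v g) (huv : ∀ i, u i ≤ v i) :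
    mergedIndex g v c u < ∑ i, v i := by
  have := sum_le_sum (s := univ.filter (g < ·)) fun i _ => huv i
  rw [mergedIndex, sum_eq_sum_filter_lt_add_add_sum_filter_gt v g]
  omega

theorem sum_tsub_mergedIndex_add_one (hc : c < w g) (huv : ∀ i, u i ≤ v i)
    (hvw : ∀ i, v i ≤ w i) :
    ∑ i, w i - (mergedIndex g v c u + 1) =
      (w g - (c + 1)) + ∑ i ∈ univ.filter (· < g), (w i - v i)
        + ∑ i ∈ univ.filter (g < ·), (w i - u i) := by
  have hvw' := sum_le_sum (s := univ.filter (· < g)) fun i _ => hvw i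
  have huw := sum_le_sum (s := univ.filter (g < ·)) fun i _ => (huv i).trans (hvw i)
  rw [mergedIndex, sum_tsub_distrib _ fun i _ => hvw i,
    sum_tsub_distrib _ fun i _ => (huv i).trans (hvw i),
    sum_eq_sum_filter_lt_add_add_sum_filter_gt w g]
  omega

end MergedIndex

/-- Arm-length decomposition in an entry-wise sum of partitions.
Let `λ¹,…,λ^r` be partitions, `g ∈ [r]`, and `b = (c, ρ)` a box of `λ^g`
(column `c`, row `ρ`, 0-indexed) whose column has height `h`.  Identify the
boxes of `λ^{[r]} = λ¹ ⊕ ⋯ ⊕ λ^r` with boxes of the `λ^i` by sorting all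
columns decreasingly by height, ties broken by placing columns of `λ^i`
before those of `λ^j` for `i < j`; thus `b` sits in column
`c' = (#columns of height > h among all λ^i)
   + (#columns of height = h among λ^i, i < g)
   + (#columns of λ^g before c of height = h)` of `λ^{[r]}`.
Then the leg-length is preserved (`conjPart λ^{[r]} c' = h`) and the
arm-length of `b` in `λ^{[r]}` equals `∑_i a_i(b)`, where `a_g(b)` is the
arm-length in `λ^g`, for `i < g`, `a_i(b)` counts boxes in row `ρ` of `λ^i`
with column height `< h`, and for `i > g` those with column height `≤ h`. -/
theorem stmt_19 (r : ℕ) (lam : Fin r → (ℕ →₀ ℕ))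
    (hlam : ∀ i, Antitone ⇑(lam i))
    (g : Fin r) (c ρ : ℕ) (hc : c < lam g ρ) :
    let h := conjPart (lam g) c
    let tall := fun i : Fin r =>
      ((Finset.range (lam i 0)).filter (fun c'' => h < conjPart (lam i) c'')).card
    let eqh := fun i : Fin r =>
      ((Finset.range (lam i 0)).filter (fun c'' => conjPart (lam i) c'' = h)).card
    let c' := (∑ i : Fin r, tall i)
      + (∑ i ∈ Finset.univ.filter (fun i : Fin r => i < g), eqh i)
      + (c - tall g)
    conjPart (∑ i : Fin r, lam i) c' = h ∧
      (∑ i : Fin r, lam i) ρ - (c' + 1)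
        = (lam g ρ - (c + 1))
          + (∑ i ∈ Finset.univ.filter (fun i : Fin r => i < g),
              ((Finset.range (lam i ρ)).filter
                (fun c'' => conjPart (lam i) c'' < h)).card)
          + (∑ i ∈ Finset.univ.filter (fun i : Fin r => g < i),
              ((Finset.range (lam i ρ)).filter
                (fun c'' => conjPart (lam i) c'' ≤ h)).card) := by
  intro h tall eqh c'
  have hρh : ρ < h := (lt_apply_iff_lt_conjPart (hlam g) c ρ).mp hc
  obtain ⟨hcm, hcp⟩ : lam g h ≤ c ∧ c < lam g (h - 1) :=
    apply_conjPart_le_and_lt_apply (hlam g) hc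
  have hstep : ∀ i, lam i h ≤ lam i (h - 1) := fun i => hlam i (Nat.sub_le h 1)
  have hρ : ∀ i, lam i (h - 1) ≤ lam i ρ := fun i => hlam i (Nat.le_sub_one_of_lt hρh)
  have hc' : c' = mergedIndex g (lam · (h - 1)) c (lam · h) := by
    refine Eq.trans ?_ (sum_add_sum_tsub_add_tsub_eq_mergedIndex g hcm hstep)
    simp only [c', tall, eqh,
      fun i => card_filter_range_lt_conjPart (hlam i) (Nat.zero_le h),
      fun i => card_filter_range_conjPart_eq (hlam i) (Nat.zero_lt_of_lt hρh)]
  rw [hc']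
  refine ⟨conjPart_eq_of_apply_le_of_lt (Finsupp.antitone_finset_sum _ _ hlam)
    (Nat.zero_lt_of_lt hρh)
    (by rw [Finsupp.finsetSum_apply]; exact sum_le_mergedIndex g hcm hstep)
    (by rw [Finsupp.finsetSum_apply]; exact mergedIndex_lt_sum g hcp hstep), ?_⟩
  rw [Finsupp.finsetSum_apply,
    sum_congr rfl fun i _ => card_filter_range_conjPart_lt (hlam i) hρh,
    sum_congr rfl fun i _ => card_filter_range_conjPart_le (hlam i) hρh.le]
  exact sum_tsub_mergedIndex_add_one g hc hstep hρ
end
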